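/- arXiv:2003.05749 — 2 statements merged into one kernel-verified Lean document; each statement's English description precedes it below -/
import Mathlib

section
/- Let α, β, γ, δ ∈ ℝ with α + δ ≠ 0 and αγ + βδ = 0. Then (𝔤₅, g, J) is a first kind algebraic Wanas soliton associated to the canonical connection ∇⁰ if and only if the soliton constant satisfies c = α² + (β+γ)²/2 + δ²; in that case the derivation D satisfies De₁ = −(α² + (β+γ)²/2 + δ²)e₁, De₂ = −(α² + (β+γ)²/2 + δ²)e₂, De₃ = 0. -/
noncomputable section

/-- The underlying vector space `ℝ³`. -/
abbrev V : Type := Fin 3 → ℝ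

/-- The basis vector `e₁`. -/
def e1 : V := ![1, 0, 0]

/-- The basis vector `e₂`. -/
def e2 : V := ![0, 1, 0]

/-- The basis vector `e₃`. -/
def e3 : V := ![0, 0, 1]

/-- The Lorentzian metric `g` with `g(e₁,e₁) = g(e₂,e₂) = 1`, `g(e₃,e₃) = -1`. -/
def g (x y : V) : ℝ := x 0 * y 0 + x 1 * y 1 - x 2 * y 2

/-- The Lie bracket. -/
def br (α β γ δ : ℝ) (x y : V) : V :=
  (x 0 * y 2 - x 2 * y 0) • (α • e1 + β • e2) + (x 1 * y 2 - x 2 * y 1) • (γ • e1 + δ • e2)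

/-- The canonical connection `∇⁰`. -/
def nab (α β γ δ : ℝ) (x y : V) : V :=
  (x 2 * y 0) • (-(((β - γ) / 2) • e2)) + (x 2 * y 1) • (((β - γ) / 2) • e1)

/-- The torsion `T⁰(X,Y) = ∇⁰_X Y - ∇⁰_Y X - [X,Y]`. -/
def T (α β γ δ : ℝ) (x y : V) : V := nab α β γ δ x y - nab α β γ δ y x - br α β γ δ x y

/-- The tensor `A⁰(X,Y)Z = T⁰(T⁰(X,Y),Z)`. -/
def A (α β γ δ : ℝ) (x y z : V) : V := T α β γ δ (T α β γ δ x y) z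

/-- The curvature `R⁰(X,Y)Z = ∇⁰_X ∇⁰_Y Z - ∇⁰_Y ∇⁰_X Z - ∇⁰_{[X,Y]} Z`. -/
def Rc (α β γ δ : ℝ) (x y z : V) : V :=
  nab α β γ δ x (nab α β γ δ y z) - nab α β γ δ y (nab α β γ δ x z) - nab α β γ δ (br α β γ δ x y) z

/-- The Wanas tensor `W⁰(X,Y)Z = R⁰(X,Y)Z - A⁰(X,Y)Z`. -/
def W (α β γ δ : ℝ) (x y z : V) : V := Rc α β γ δ x y z - A α β γ δ x y z

/-- `w⁰(X,Y) = -g(W⁰(X,e₁)Y,e₁) - g(W⁰(X,e₂)Y,e₂) + g(W⁰(X,e₃)Y,e₃)`. -/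
def w (α β γ δ : ℝ) (x y : V) : ℝ :=
  -g (W α β γ δ x e1 y) e1 - g (W α β γ δ x e2 y) e2 + g (W α β γ δ x e3 y) e3

/-- `w̃⁰(X,Y) = (w⁰(X,Y) + w⁰(Y,X))/2`. -/
def wt (α β γ δ : ℝ) (x y : V) : ℝ := (w α β γ δ x y + w α β γ δ y x) / 2

/-- `D` is a derivation of the Lie algebra. -/
def IsDeriv (α β γ δ : ℝ) (D : V →ₗ[ℝ] V) : Prop :=
  ∀ x y, D (br α β γ δ x y) = br α β γ δ (D x) y + br α β γ δ x (D y)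

lemma w_eq (α β γ δ : ℝ) (x y : V) :
    w α β γ δ x y = -(α ^ 2 + (β + γ) ^ 2 / 2 + δ ^ 2) * (x 2 * y 2) := by
  simp [w, W, Rc, A, T, nab, br, g, e1, e2, e3]
  ring

lemma decomp (x : V) : x = x 0 • e1 + x 1 • e2 + x 2 • e3 := by
  funext i; fin_cases i <;> simp [e1, e2, e3]

lemma wan_apply (α β γ δ : ℝ) (Wan : V →ₗ[ℝ] V)
    (hWan : ∀ x y, w α β γ δ x y = g (Wan x) y) (x : V) :
    Wan x = ((α ^ 2 + (β + γ) ^ 2 / 2 + δ ^ 2) * x 2) • e3 := by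
  have h0 := hWan x e1
  have h1 := hWan x e2
  have h3 := hWan x e3
  rw [w_eq] at h0 h1 h3
  simp [g, e1, e2, e3] at h0 h1 h3
  funext i; fin_cases i <;> simp [e3, ← h0, ← h1] <;> linarith

lemma Dx_eq (k : ℝ) (D : V →ₗ[ℝ] V) (h1 : D e1 = (-k) • e1) (h2 : D e2 = (-k) • e2)
    (h3 : D e3 = 0) (x : V) : D x = (-k * x 0) • e1 + (-k * x 1) • e2 := by
  conv_lhs => rw [decomp x]
  simp [map_add, map_smul, h1, h2, h3, smul_smul]
  module

theorem g5_first_kind_algebraic_Wanas_soliton (α β γ δ : ℝ)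
    (h1 : α + δ ≠ 0) (h2 : α * γ + β * δ = 0)
    (Wan : V →ₗ[ℝ] V) (hWan : ∀ x y, w α β γ δ x y = g (Wan x) y)
    (c : ℝ) (D : V →ₗ[ℝ] V) :
    (IsDeriv α β γ δ D ∧ ∀ x, Wan x = c • x + D x) ↔
      c = α ^ 2 + (β + γ) ^ 2 / 2 + δ ^ 2 ∧
        D e1 = (-(α ^ 2 + (β + γ) ^ 2 / 2 + δ ^ 2)) • e1 ∧
        D e2 = (-(α ^ 2 + (β + γ) ^ 2 / 2 + δ ^ 2)) • e2 ∧ D e3 = 0 := by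
  obtain ⟨k, hk⟩ : ∃ k : ℝ, k = α ^ 2 + (β + γ) ^ 2 / 2 + δ ^ 2 := ⟨_, rfl⟩
  rw [← hk]
  have hwan : ∀ x, Wan x = (k * x 2) • e3 := by
    intro x; rw [wan_apply α β γ δ Wan hWan x, ← hk]
  have hbr13 : br α β γ δ e1 e3 = α • e1 + β • e2 := by
    funext i; fin_cases i <;> simp [br, e1, e2, e3]
  have hbr23 : br α β γ δ e2 e3 = γ • e1 + δ • e2 := by
    funext i; fin_cases i <;> simp [br, e1, e2, e3]
  constructor
  · rintro ⟨hder, heq⟩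
    have hD1 : D e1 = (-c) • e1 := by
      have h := heq e1
      rw [hwan e1] at h
      have he : e1 2 = 0 := by simp [e1]
      rw [he, mul_zero, zero_smul] at h
      rw [neg_smul]
      exact eq_neg_of_add_eq_zero_right h.symm
    have hD2 : D e2 = (-c) • e2 := by
      have h := heq e2
      rw [hwan e2] at h
      have he : e2 2 = 0 := by simp [e2]
      rw [he, mul_zero, zero_smul] at h
      rw [neg_smul]
      exact eq_neg_of_add_eq_zero_right h.symm
    have hD3 : D e3 = (k - c) • e3 := by
      have h := heq e3
      rw [hwan e3] at h
      have he : e3 2 = 1 := by simp [e3]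
      rw [he, mul_one] at h
      rw [sub_smul]
      exact eq_sub_of_add_eq' h.symm
    have hb1 := hder e1 e3
    have hb2 := hder e2 e3
    rw [hbr13, map_add, map_smul, map_smul, hD1, hD2, hD3] at hb1
    rw [hbr23, map_add, map_smul, map_smul, hD1, hD2, hD3] at hb2
    have ha : (k - c) * α = 0 := by
      have h := congrFun hb1 0
      simp [br, e1, e2, e3] at h
      linear_combination -h
    have hdd : (k - c) * δ = 0 := by
      have h := congrFun hb2 1
      simp [br, e1, e2, e3] at h
      linear_combination -h
    have hck : c = k := by
      have h : (k - c) * (α + δ) = 0 := by linear_combination ha + hdd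
      rcases mul_eq_zero.mp h with h | h
      · linarith [sub_eq_zero.mp h]
      · exact absurd h h1
    refine ⟨hck, ?_, ?_, ?_⟩
    · rw [hD1, hck]
    · rw [hD2, hck]
    · rw [hD3, hck, sub_self, zero_smul]
  · rintro ⟨hc, hd1, hd2, hd3⟩
    have hd1' : D e1 = (-k) • e1 := hd1
    have hd2' : D e2 = (-k) • e2 := hd2
    constructor
    · intro x y
      rw [Dx_eq k D hd1' hd2' hd3, Dx_eq k D hd1' hd2' hd3 x, Dx_eq k D hd1' hd2' hd3 y]
      funext i; fin_cases i <;> simp [br, e1, e2, e3] <;> ring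
    · intro x
      rw [hwan x, Dx_eq k D hd1' hd2' hd3, hc]
      funext i; fin_cases i <;> simp [e1, e2, e3] <;> ring
end
end

section
/- Let α, β, γ, δ ∈ ℝ with α + δ ≠ 0 and αγ + βδ = 0. For (𝔤₅, g, J), the bilinear form w⁰ is symmetric, so that W̃an⁰ = Wan⁰; consequently, (𝔤₅, g, J) is a first kind algebraic Wanas soliton associated to the canonical connection ∇⁰ if and only if it is a second kind algebraic Wanas soliton associated to ∇⁰. -/
noncomputable section

theorem g5_first_kind_iff_second_kind (α β γ δ : ℝ)
    (h1 : α + δ ≠ 0) (h2 : α * γ + β * δ = 0)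
    (Wan tWan : V →ₗ[ℝ] V)
    (hWan : ∀ x y, w α β γ δ x y = g (Wan x) y)
    (htWan : ∀ x y, wt α β γ δ x y = g (tWan x) y) :
    (∀ x y, w α β γ δ x y = w α β γ δ y x) ∧ tWan = Wan ∧
      ((∃ (c : ℝ) (D : V →ₗ[ℝ] V), IsDeriv α β γ δ D ∧ ∀ x, Wan x = c • x + D x) ↔
        (∃ (c : ℝ) (D : V →ₗ[ℝ] V), IsDeriv α β γ δ D ∧ ∀ x, tWan x = c • x + D x)) := by
  have hsym : ∀ x y, w α β γ δ x y = w α β γ δ y x := by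
    intro x y
    simp only [w, W, Rc, A, T, nab, br, g, e1, e2, e3, Pi.add_apply, Pi.sub_apply, Pi.smul_apply,
      Pi.neg_apply, smul_eq_mul, Matrix.cons_val_zero, Matrix.cons_val_one, Matrix.head_cons,
      Matrix.cons_val_two, Matrix.tail_cons]
    ring_nf
  have hwt : ∀ x y, wt α β γ δ x y = w α β γ δ x y := by
    intro x y; rw [wt, hsym y x]; ring
  have key : ∀ (x y : V), g (tWan x) y = g (Wan x) y := fun x y =>
    (htWan x y).symm.trans ((hwt x y).trans (hWan x y))
  have heq : tWan = Wan := by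
    refine LinearMap.ext fun x => funext fun i => ?_
    have h1 := key x e1
    have h2 := key x e2
    have h3 := key x e3
    simp only [g, e1, e2, e3, Matrix.cons_val_zero, Matrix.cons_val_one, Matrix.head_cons, Matrix.cons_val_two, Matrix.tail_cons,
      mul_one, mul_zero, add_zero, zero_add, sub_zero, zero_sub, mul_neg, neg_neg] at h1 h2 h3
    fin_cases i
    · simpa using h1
    · simpa using h2
    · have : tWan x 2 = Wan x 2 := by linarith
      simpa using this
  exact ⟨hsym, heq, by rw [heq]⟩
end
end
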